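/- (Deterministic content of the microscopic Hopf–Cole transform, Proposition 2.1(a).) Let q ∈ (0,1), let j > 0 be real, let h : ℤ → ℝ, let C ∈ ℝ, and define Z(x) := C·q^{−2h(x)} for x ∈ ℤ. Set η(y) := h(y) − h(y−1), set ν := ([4j]_q/(2[2j]_q) − 1)/ln q, and define Ω(x) := (q² − 1)·c⁺_q(η(x), η(x+1)) + (q⁻² − 1)·c⁻_q(η(x), η(x+1)) + ν·ln q. Then for every x ∈ ℤ one has Ω(x)·Z(x) = ½·(Z(x+1) + Z(x−1) − 2Z(x)), i.e. Z satisfies the discrete heat equation drift relation. -/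

import Mathlib

/-!
Writing `A = q^{η(x)}` and `B = q^{η(x+1)}`, the Hopf–Cole variable satisfies
`Z(x-1) = A² Z(x)` and `Z(x+1) = B⁻² Z(x)`, so the claim amounts to `Ω(x) = (A² + B⁻²)/2 - 1`.
After expanding every `q`-number, this is a rational identity in `q`, `q^j`, `A`, `B`,
valid whenever `q ≠ 1` and `[2j]_q ≠ 0`.
-/

/-- The `q`-number `[n]_q = (q^n - q^(-n))/(q - q⁻¹)` for real `n`. -/
noncomputable def qNum (q n : ℝ) : ℝ := (q ^ n - q ^ (-n)) / (q - q⁻¹)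

/-- ASEP(q,j) jump rate from `x` to `x+1`, with occupation values `a` at `x`, `b` at `x+1`. -/
noncomputable def cPlus (q j a b : ℝ) : ℝ :=
  (1 / (2 * qNum q (2*j))) * q ^ (a - b - (2*j + 1)) * qNum q (j + a) * qNum q (j - b)

/-- ASEP(q,j) jump rate from `x+1` to `x`, with occupation values `a` at `x`, `b` at `x+1`. -/
noncomputable def cMinus (q j a b : ℝ) : ℝ :=
  (1 / (2 * qNum q (2*j))) * q ^ (a - b + (2*j + 1)) * qNum q (j - a) * qNum q (j + b)

lemma rpow_sub_rpow_neg_ne_zero {q n : ℝ} (hq₀ : 0 < q) (hq₁ : q ≠ 1) (hn : n ≠ 0) :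
    q ^ n - q ^ (-n) ≠ 0 := by
  rw [sub_ne_zero, Ne, Real.rpow_right_inj hq₀ hq₁]
  contrapose! hn
  linarith

lemma rpow_two_mul {q : ℝ} (hq : 0 ≤ q) (x : ℝ) : q ^ (2 * x) = (q ^ x) ^ 2 := by
  rw [mul_comm]
  exact_mod_cast Real.rpow_mul_natCast hq x 2

lemma cPlus_cMinus_combination_eq {q j : ℝ} (hq₀ : 0 < q) (hq₁ : q ≠ 1) (hj : j ≠ 0) (a b : ℝ) :
    (q ^ (2:ℝ) - 1) * cPlus q j a b + (q ^ (-2:ℝ) - 1) * cMinus q j a b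
      + qNum q (4 * j) / (2 * qNum q (2 * j)) = (q ^ (2 * a) + q ^ (-2 * b)) / 2 := by
  have hq := rpow_sub_rpow_neg_ne_zero hq₀ hq₁ one_ne_zero
  have h2j := rpow_sub_rpow_neg_ne_zero hq₀ hq₁ (mul_ne_zero two_ne_zero hj)
  have hJ := (Real.rpow_pos_of_pos hq₀ j).ne'
  have hA := (Real.rpow_pos_of_pos hq₀ a).ne'
  have hB := (Real.rpow_pos_of_pos hq₀ b).ne'
  simp only [cPlus, cMinus, qNum, show (4:ℝ) * j = 2 * (2 * j) by ring, neg_mul,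
    Real.rpow_add hq₀, Real.rpow_sub hq₀, Real.rpow_neg hq₀.le, rpow_two_mul hq₀.le,
    Real.rpow_one, Real.rpow_two] at hq h2j ⊢
  generalize q ^ j = J at *
  generalize q ^ a = A at *
  generalize q ^ b = B at *
  have hq' : q ^ 2 - 1 ≠ 0 := by
    contrapose! hq
    field_simp
    linear_combination hq
  have h2j' : J ^ 4 - 1 ≠ 0 := by
    contrapose! h2j
    field_simp
    linear_combination h2j
  field_simp
  ring

lemma hopfCole_shift {q C : ℝ} (hq : 0 < q) {h Z : ℤ → ℝ}
    (hZ : ∀ x, Z x = C * q ^ (-2 * h x)) (x y : ℤ) :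
    Z y = q ^ (-2 * (h y - h x)) * Z x := by
  rw [hZ, hZ, mul_left_comm, ← Real.rpow_add hq]
  ring_nf

/-- Deterministic content of the microscopic Hopf–Cole transform for ASEP(q,j):
`Ω(x)·Z(x) = ½ Δ Z(x)`. -/
theorem stmt1 (q : ℝ) (hq : q ∈ Set.Ioo (0:ℝ) 1) (j : ℝ) (hj : 0 < j)
    (h : ℤ → ℝ) (C : ℝ)
    (Z : ℤ → ℝ) (hZ : ∀ x, Z x = C * q ^ (-2 * h x))
    (η : ℤ → ℝ) (hη : ∀ y, η y = h y - h (y - 1))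
    (ν : ℝ) (hν : ν = (qNum q (4*j) / (2 * qNum q (2*j)) - 1) / Real.log q)
    (Ω : ℤ → ℝ)
    (hΩ : ∀ x, Ω x = (q ^ (2:ℝ) - 1) * cPlus q j (η x) (η (x+1))
        + (q ^ (-2:ℝ) - 1) * cMinus q j (η x) (η (x+1)) + ν * Real.log q) :
    ∀ x : ℤ, Ω x * Z x = (1/2) * (Z (x+1) + Z (x-1) - 2 * Z x) := by
  intro x
  obtain ⟨hq₀, hq₁⟩ := hq
  have hΩx : Ω x = (q ^ (2 * η x) + q ^ (-2 * η (x + 1))) / 2 - 1 := by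
    rw [hΩ, ← cPlus_cMinus_combination_eq hq₀ hq₁.ne hj.ne', hν,
      div_mul_cancel₀ _ (Real.log_neg hq₀ hq₁).ne]
    ring
  have hZright : Z (x + 1) = q ^ (-2 * η (x + 1)) * Z x := by
    rw [hopfCole_shift hq₀ hZ x, hη, add_sub_cancel_right]
  have hZleft : Z (x - 1) = q ^ (2 * η x) * Z x := by
    rw [hopfCole_shift hq₀ hZ x, hη]
    ring_nf
  rw [hΩx, hZright, hZleft]
  ring
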